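/- arXiv:2508.07931 — 3 statements merged into one kernel-verified Lean document; each statement's English description precedes it below -/
import Mathlib

section
/- Let κ : ℝ_{>0} → ℝ be continuous with inf_{r>0} r·κ(r) > −∞ and liminf_{r→+∞} κ(r) ≥ α for some α > 0. Then for every ε ∈ (0, α) there exists a C² function f : ℝ_{>0} → ℝ such that for all r > 0: f''(r) ≥ ½ f(r) f'(r) − (r/2) κ(r), limsup_{r↓0} f(r) ≤ 0, and liminf_{r→+∞} r^{-1} f(r) ≥ √(α − ε). Moreover f can be chosen so that for all sufficiently large r, f(r) = √(α − ε)·(r − r⁺) for some r⁺ > 0 (in particular f is eventually linear with slope √(α − ε)). -/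
/-! The profile can be taken affine, `f r = √(α - ε) (r - r⁺)`, so that `f'' = 0` and the
inequality reduces to `(α - ε)(r - r⁺) ≤ r κ(r)`. Beyond some `R` this holds because
`κ > α - ε` there; on `(0, R)` it holds once the shift `r⁺` is so large that
`(α - ε)(R - r⁺)` lies below the lower bound `m` of `r κ(r)`. -/

open Real Set Filter Topology

lemma isBoundedUnder_ge_atTop_of_le_mul {κ : ℝ → ℝ} {m : ℝ} (hm : ∀ r : ℝ, 0 < r → m ≤ r * κ r) :
    IsBoundedUnder (· ≥ ·) atTop κ := by
  refine isBoundedUnder_of_eventually_ge (a := min m 0) ?_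
  filter_upwards [eventually_ge_atTop 1] with r hr
  rcases le_or_gt 0 (κ r) with h | h
  · exact (min_le_right _ _).trans h
  · exact (min_le_left _ _).trans (by nlinarith [hm r (by linarith)])

lemma exists_pos_shift_mul_sub_le {κ : ℝ → ℝ} {m c R : ℝ} (hc : 0 < c)
    (hm : ∀ r : ℝ, 0 < r → m ≤ r * κ r) (hR : ∀ r, R ≤ r → c ≤ κ r) :
    ∃ rp : ℝ, 0 < rp ∧ ∀ r : ℝ, 0 < r → c * (r - rp) ≤ r * κ r := by
  refine ⟨max 1 (R - m / c), by positivity, fun r hr => ?_⟩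
  have hrp1 : 1 ≤ max 1 (R - m / c) := le_max_left _ _
  have hrpR : R - m / c ≤ max 1 (R - m / c) := le_max_right _ _
  rcases le_or_gt R r with hRr | hrR
  · nlinarith [hR r hRr]
  · calc c * (r - max 1 (R - m / c)) ≤ c * (R - (R - m / c)) := by gcongr
      _ = m := by field_simp; ring
      _ ≤ r * κ r := hm r hr

lemma tendsto_mul_sub_div_atTop (s a : ℝ) :
    Tendsto (fun r => s * (r - a) / r) atTop (𝓝 s) := by
  have h : Tendsto (fun r : ℝ => s - s * a / r) atTop (𝓝 (s - 0)) :=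
    tendsto_const_nhds.sub (tendsto_const_nhds.div_atTop tendsto_id)
  rw [sub_zero] at h
  refine h.congr' ?_
  filter_upwards [eventually_ne_atTop 0] with r hr
  field_simp

theorem stmt9_general (κ : ℝ → ℝ)
    (hbdd : ∃ m : ℝ, ∀ r : ℝ, 0 < r → m ≤ r * κ r)
    (α : ℝ)
    (hliminf : α ≤ Filter.liminf κ Filter.atTop) :
    ∀ ε ∈ Set.Ioo (0 : ℝ) α, ∃ f : ℝ → ℝ,
      ContDiffOn ℝ 2 f (Set.Ioi 0) ∧
      (∀ r : ℝ, 0 < r →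
        deriv (deriv f) r ≥ (1 / 2) * (f r * deriv f r) - r / 2 * κ r) ∧
      Filter.limsup f (nhdsWithin 0 (Set.Ioi 0)) ≤ 0 ∧
      Real.sqrt (α - ε) ≤ Filter.liminf (fun r => f r / r) Filter.atTop ∧
      ∃ rp : ℝ, 0 < rp ∧ ∃ R : ℝ, ∀ r : ℝ, R ≤ r → f r = Real.sqrt (α - ε) * (r - rp) := by
  obtain ⟨m, hm⟩ := hbdd
  rintro ε ⟨hε, hεα⟩
  set s := √(α - ε)
  have hs2 : s ^ 2 = α - ε := sq_sqrt (by linarith)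
  obtain ⟨R, hR⟩ := eventually_atTop.mp <|
    eventually_lt_of_lt_liminf (show s ^ 2 < liminf κ atTop by linarith)
      (isBoundedUnder_ge_atTop_of_le_mul hm)
  obtain ⟨rp, hrp, hprofile⟩ :=
    exists_pos_shift_mul_sub_le (by linarith) hm fun r hr => (hR r hr).le
  have hderiv : deriv (fun r => s * (r - rp)) = fun _ => s := by simp
  refine ⟨fun r => s * (r - rp), by fun_prop, fun r hr => ?_, ?_, ?_, rp, hrp, 0, fun _ _ => rfl⟩
  · rw [hderiv, deriv_const]
    linear_combination (1 / 2 : ℝ) * hprofile r hr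
  · have hf0 : Tendsto (fun r => s * (r - rp)) (𝓝[>] 0) (𝓝 (s * (0 - rp))) :=
      (Continuous.tendsto (by fun_prop) 0).mono_left nhdsWithin_le_nhds
    rw [hf0.limsup_eq]
    nlinarith [sqrt_nonneg (α - ε)]
  · rw [(tendsto_mul_sub_div_atTop s rp).liminf_eq]

/-- given a continuous lower convexity bound `κ` with `inf_{r>0} r κ(r) > -∞`
and `liminf_{r→∞} κ(r) ≥ α > 0`, for every `ε ∈ (0,α)` there is a `C²` invariant profile `f`
with `f'' ≥ ½ f f' - (r/2)κ(r)`, `limsup_{r↓0} f ≤ 0`, `liminf_{r→∞} r⁻¹f(r) ≥ √(α-ε)`, and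
`f` eventually linear with slope `√(α-ε)`. -/
theorem stmt9 (κ : ℝ → ℝ) (hκcont : ContinuousOn κ (Set.Ioi 0))
    (hbdd : ∃ m : ℝ, ∀ r : ℝ, 0 < r → m ≤ r * κ r)
    (α : ℝ) (hα : 0 < α)
    (hliminf : α ≤ Filter.liminf κ Filter.atTop) :
    ∀ ε ∈ Set.Ioo (0 : ℝ) α, ∃ f : ℝ → ℝ,
      ContDiffOn ℝ 2 f (Set.Ioi 0) ∧
      (∀ r : ℝ, 0 < r →
        deriv (deriv f) r ≥ (1 / 2) * (f r * deriv f r) - r / 2 * κ r) ∧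
      Filter.limsup f (nhdsWithin 0 (Set.Ioi 0)) ≤ 0 ∧
      Real.sqrt (α - ε) ≤ Filter.liminf (fun r => f r / r) Filter.atTop ∧
      ∃ rp : ℝ, 0 < rp ∧ ∃ R : ℝ, ∀ r : ℝ, R ≤ r → f r = Real.sqrt (α - ε) * (r - rp) :=
  stmt9_general κ hbdd α hliminf
end

section
/- Let β ∈ ℝ, σ̄ > 0, L > 0, T > 0, and let A, B : [0,T] → ℝ be C¹ functions satisfying A'(t) = A(t)² − β and B'(t) = A(t) B(t) for all t ∈ [0,T]. Define h_L(r) := 2σ̄√L · tanh(√L r / (2σ̄)) and f_t(r) := A(t) r − B(t) h_L(B(t) r). Then for all (t,r) ∈ [0,T] × ℝ, ∂_t f_t(r) + 2σ̄² ∂²_{rr} f_t(r) = f_t(r) ∂_r f_t(r) − β r. -/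
/-!
Substituting `f_t(r) = A r - B h(B r)` and using `A' = A² - β`, `B' = A B`, every term cancels
except `B³ (2σ̄² h'' + h h')(B r)`. So the ansatz solves the equation for any profile `h` solving
the stationary viscous Burgers equation `2σ̄² h'' = -h h'`. The profile `h_L` satisfies the Riccati
equation `h' = L - h² / (4σ̄²)`, and differentiating it once more gives the Burgers equation.
-/

open Real Set

/-- The hyperbolic tangent profile `h_L(r) = 2σ̄√L tanh(√L r/(2σ̄))`. -/
noncomputable def hLfun (σ L r : ℝ) : ℝ := 2 * σ * Real.sqrt L * Real.tanh (Real.sqrt L * r / (2 * σ))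

/-- The linear-hyperbolic ansatz `f_t(r) = A(t) r - B(t) h_L(B(t) r)`. -/
noncomputable def linHypProfile (σ L : ℝ) (A B : ℝ → ℝ) (t r : ℝ) : ℝ :=
  A t * r - B t * hLfun σ L (B t * r)

theorem Real.hasDerivAt_tanh (x : ℝ) : HasDerivAt tanh (1 - tanh x ^ 2) x := by
  have h := (hasDerivAt_sinh x).div (hasDerivAt_cosh x) (cosh_pos x).ne'
  rw [show sinh / cosh = tanh from funext fun y => (tanh_eq_sinh_div_cosh y).symm] at h
  refine h.congr_deriv ?_
  rw [tanh_eq_sinh_div_cosh]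
  field_simp

theorem HasDerivAt.comp_const_mul {h : ℝ → ℝ} {h' b ρ : ℝ} (hh : HasDerivAt h h' (b * ρ)) :
    HasDerivAt (fun ρ => h (b * ρ)) (b * h') ρ := by
  have := hh.comp ρ ((hasDerivAt_id ρ).const_mul b)
  simpa [mul_comm, Function.comp_def] using this

section Ansatz

variable {h h' h'' : ℝ → ℝ}

theorem hasDerivAt_ansatz_time {A B : ℝ → ℝ} {A' B' t : ℝ} (r : ℝ)
    (hh : HasDerivAt h (h' (B t * r)) (B t * r))
    (hA : HasDerivAt A A' t) (hB : HasDerivAt B B' t) :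
    HasDerivAt (fun s => A s * r - B s * h (B s * r))
      (A' * r - (B' * h (B t * r) + B t * (h' (B t * r) * (B' * r)))) t :=
  (hA.mul_const r).sub (hB.mul (hh.comp t (hB.mul_const r)))

theorem hasDerivAt_ansatz_space (a b ρ : ℝ) (hh : HasDerivAt h (h' (b * ρ)) (b * ρ)) :
    HasDerivAt (fun ρ => a * ρ - b * h (b * ρ)) (a - b ^ 2 * h' (b * ρ)) ρ :=
  (((hasDerivAt_id' ρ).const_mul a).sub (hh.comp_const_mul.const_mul b)).congr_deriv (by ring)

theorem deriv_deriv_ansatz_space (hh : ∀ x, HasDerivAt h (h' x) x)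
    (hh' : ∀ x, HasDerivAt h' (h'' x) x) (a b ρ : ℝ) :
    deriv (deriv fun ρ => a * ρ - b * h (b * ρ)) ρ = -(b ^ 3 * h'' (b * ρ)) := by
  have hd : deriv (fun ρ => a * ρ - b * h (b * ρ)) = fun ρ => a - b ^ 2 * h' (b * ρ) :=
    funext fun ρ => (hasDerivAt_ansatz_space a b ρ (hh _)).deriv
  rw [hd, ((((hh' (b * ρ)).comp_const_mul).const_mul (b ^ 2)).const_sub a).deriv]
  ring

theorem ansatz_pde_of_burgers (σ β : ℝ) {A B : ℝ → ℝ} {t : ℝ}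
    (hh : ∀ x, HasDerivAt h (h' x) x) (hh' : ∀ x, HasDerivAt h' (h'' x) x)
    (hburgers : ∀ x, 2 * σ ^ 2 * h'' x = -(h x * h' x))
    (hA : HasDerivAt A (A t ^ 2 - β) t) (hB : HasDerivAt B (A t * B t) t) (r : ℝ) :
    deriv (fun s => A s * r - B s * h (B s * r)) t
        + 2 * σ ^ 2 * deriv (deriv fun ρ => A t * ρ - B t * h (B t * ρ)) r
      = (A t * r - B t * h (B t * r)) * deriv (fun ρ => A t * ρ - B t * h (B t * ρ)) r
        - β * r := by
  rw [(hasDerivAt_ansatz_time r (hh _) hA hB).deriv, deriv_deriv_ansatz_space hh hh',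
    (hasDerivAt_ansatz_space _ _ r (hh _)).deriv]
  linear_combination -B t ^ 3 * hburgers (B t * r)

end Ansatz

theorem hasDerivAt_hLfun {σ L : ℝ} (hσ : σ ≠ 0) (hL : 0 ≤ L) (x : ℝ) :
    HasDerivAt (hLfun σ L) (L - hLfun σ L x ^ 2 / (4 * σ ^ 2)) x := by
  have hu : HasDerivAt (fun y => √L * y / (2 * σ)) (√L / (2 * σ)) x := by
    simpa using ((hasDerivAt_id x).const_mul √L).div_const (2 * σ)
  refine (((hasDerivAt_tanh _).comp x hu).const_mul (2 * σ * √L)).congr_deriv ?_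
  unfold hLfun
  field_simp
  rw [sq_sqrt hL]
  ring

theorem hasDerivAt_riccati_hLfun {σ L : ℝ} (hσ : σ ≠ 0) (hL : 0 ≤ L) (x : ℝ) :
    HasDerivAt (fun x => L - hLfun σ L x ^ 2 / (4 * σ ^ 2))
      (-(hLfun σ L x * (L - hLfun σ L x ^ 2 / (4 * σ ^ 2))) / (2 * σ ^ 2)) x := by
  refine ((((hasDerivAt_hLfun hσ hL x).pow 2).div_const (4 * σ ^ 2)).const_sub L).congr_deriv ?_
  field_simp
  ring

theorem stmt12_general (β σ L T : ℝ) (hσ : 0 < σ) (hL : 0 < L)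
    (A B : ℝ → ℝ)
    (hA : ∀ t ∈ Set.Icc (0 : ℝ) T, HasDerivAt A (A t ^ 2 - β) t)
    (hB : ∀ t ∈ Set.Icc (0 : ℝ) T, HasDerivAt B (A t * B t) t) :
    ∀ t ∈ Set.Icc (0 : ℝ) T, ∀ r : ℝ,
      deriv (fun s => linHypProfile σ L A B s r) t
          + 2 * σ ^ 2 * deriv (deriv (fun ρ => linHypProfile σ L A B t ρ)) r
        = linHypProfile σ L A B t r * deriv (fun ρ => linHypProfile σ L A B t ρ) r - β * r := by
  intro t ht r
  have hσ₀ : σ ≠ 0 := hσ.ne'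
  exact ansatz_pde_of_burgers (h := hLfun σ L) σ β (hasDerivAt_hLfun hσ₀ hL.le)
    (hasDerivAt_riccati_hLfun hσ₀ hL.le) (fun x => by field_simp) (hA t ht) (hB t ht) r

/-- if `A' = A² - β` and `B' = A·B` on `[0,T]`, then
`f_t(r) = A(t) r - B(t) h_L(B(t) r)` solves `∂_t f + 2σ̄² ∂²_rr f = f ∂_r f - β r`. -/
theorem stmt12 (β σ L T : ℝ) (hσ : 0 < σ) (hL : 0 < L) (hT : 0 < T)
    (A B : ℝ → ℝ)
    (hA : ∀ t ∈ Set.Icc (0 : ℝ) T, HasDerivAt A (A t ^ 2 - β) t)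
    (hB : ∀ t ∈ Set.Icc (0 : ℝ) T, HasDerivAt B (A t * B t) t) :
    ∀ t ∈ Set.Icc (0 : ℝ) T, ∀ r : ℝ,
      deriv (fun s => linHypProfile σ L A B s r) t
          + 2 * σ ^ 2 * deriv (deriv (fun ρ => linHypProfile σ L A B t ρ)) r
        = linHypProfile σ L A B t r * deriv (fun ρ => linHypProfile σ L A B t ρ) r - β * r :=
  stmt12_general β σ L T hσ hL A B hA hB
end

section
/- Let a, b > 0 and set τ := min{2b/a, 2a^{1/2}/b, 2a^{3/2}/b}, α_τ := 2 a^{-1/2} b τ^{-2}, β_τ := a^{1/2} − 2 a^{-1/2} b τ^{-1}, and p(r) := ½ α_τ r² + β_τ r. Then for every r ∈ [0, τ]: 2 p''(r) − p(r) p'(r) + a r − b ≥ 0. -/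
/-!
Write `s = √a`, `c = b / s` and `x = r / τ`. Then `p(r) = s r - c x (2 - x)`, and the profile
expression factors as
`c / τ² · (4 - s τ² (1 - x)(1 - 3x) - 2 c τ x (1 - x)(2 - x))`.
The bracket is affine in `(u, v) = (s τ², c τ)`, and the choice of `τ` gives exactly
`0 ≤ u ≤ 2v` and `v ≤ 2`; checking the vertices of this triangle reduces everything to
`1 - 2x + x³ ≤ 1` and `x (1 - x)(2 - x) ≤ 1` on `[0, 1]`.
-/

open Real Set

theorem deriv_half_mul_sq_add_mul (A B : ℝ) :
    deriv (fun r : ℝ => A / 2 * r ^ 2 + B * r) = fun r => A * r + B := by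
  ext r
  have h : HasDerivAt (fun r : ℝ => A / 2 * r ^ 2 + B * r) (A / 2 * (2 * r ^ 1) + B * 1) r :=
    ((hasDerivAt_pow 2 r).const_mul (A / 2)).add ((hasDerivAt_id r).const_mul B)
  rw [h.deriv]
  ring

theorem deriv_mul_add (A B : ℝ) : deriv (fun r : ℝ => A * r + B) = fun _ => A := by
  ext r
  simp

theorem cubic_combination_le_four {u v x : ℝ} (hu : 0 ≤ u) (huv : u ≤ 2 * v) (hv : v ≤ 2)
    (hx : x ∈ Icc (0 : ℝ) 1) :
    u * ((1 - x) * (1 - 3 * x)) + 2 * v * (x * (1 - x) * (2 - x)) ≤ 4 := by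
  obtain ⟨hx0, hx1⟩ := hx
  set A := (1 - x) * (1 - 3 * x)
  set B := x * (1 - x) * (2 - x)
  have hB : 0 ≤ B := mul_nonneg (mul_nonneg hx0 (by linarith)) (by linarith)
  have hB_le : B ≤ 1 / 2 := by nlinarith [sq_nonneg (2 * x - 1)]
  -- `A + B = 1 - x * (2 - x ^ 2)`
  have hAB : A + B ≤ 1 := by nlinarith [mul_nonneg hx0 (sub_nonneg.2 hx1)]
  rcases le_total 0 A with hA | hA
  · nlinarith [mul_le_mul_of_nonneg_right huv hA]
  · nlinarith [mul_nonneg hu (neg_nonneg.2 hA)]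

theorem profile_expression_nonneg {s c τ α β r : ℝ} (hs : 0 ≤ s) (hτ : 0 < τ)
    (hsτ : s * τ ≤ 2 * c) (hcτ : c * τ ≤ 2)
    (hα : α = 2 * c * τ⁻¹ ^ 2) (hβ : β = s - 2 * c * τ⁻¹) (hr : r ∈ Icc 0 τ) :
    0 ≤ 2 * α - (α / 2 * r ^ 2 + β * r) * (α * r + β) + s ^ 2 * r - c * s := by
  set x := r / τ with hx
  have hr_eq : r = τ * x := by rw [hx]; field_simp
  have hx_mem : x ∈ Icc (0 : ℝ) 1 := by
    constructor
    · exact div_nonneg hr.1 hτ.le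
    · exact (div_le_one hτ).2 hr.2
  have hc : 0 ≤ c := by nlinarith
  have key := cubic_combination_le_four (u := s * τ ^ 2) (v := c * τ) (by positivity)
    (by nlinarith) hcτ hx_mem
  have hid : 2 * α - (α / 2 * r ^ 2 + β * r) * (α * r + β) + s ^ 2 * r - c * s
      = c / τ ^ 2 *
        (4 - (s * τ ^ 2 * ((1 - x) * (1 - 3 * x)) + 2 * (c * τ) * (x * (1 - x) * (2 - x)))) := by
    rw [hα, hβ, hr_eq]
    field_simp
    ring
  rw [hid]
  exact mul_nonneg (by positivity) (sub_nonneg.2 key)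

/-- the parabola `p(r) = ½ α_τ r² + β_τ r` tangent to the linear profile at
`τ = min{2b/a, 2a^{1/2}/b, 2a^{3/2}/b}` satisfies `2p'' - p p' + a r - b ≥ 0` on `[0, τ]`. -/
theorem stmt14 (a b : ℝ) (ha : 0 < a) (hb : 0 < b)
    (τ ατ βτ : ℝ)
    (hτ : τ = min (2 * b / a) (min (2 * Real.sqrt a / b) (2 * (a * Real.sqrt a) / b)))
    (hατ : ατ = 2 * (b / Real.sqrt a) * τ⁻¹ ^ 2)
    (hβτ : βτ = Real.sqrt a - 2 * (b / Real.sqrt a) * τ⁻¹)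
    (p : ℝ → ℝ) (hp : p = fun r : ℝ => ατ / 2 * r ^ 2 + βτ * r) :
    ∀ r ∈ Set.Icc (0 : ℝ) τ, 2 * deriv (deriv p) r - p r * deriv p r + a * r - b ≥ 0 := by
  intro r hr
  set s := Real.sqrt a
  set c := b / s
  have hs : 0 < s := Real.sqrt_pos.2 ha
  have hτ0 : 0 < τ := hτ ▸ lt_min (by positivity) (lt_min (by positivity) (by positivity))
  have haτ : τ * a ≤ 2 * b := (le_div_iff₀ ha).1 (hτ ▸ min_le_left _ _)
  have hbτ : τ * b ≤ 2 * s := (le_div_iff₀ hb).1 (hτ ▸ (min_le_right _ _).trans (min_le_left _ _))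
  have hcs : c * s = b := div_mul_cancel₀ b hs.ne'
  have hsτ : s * τ ≤ 2 * c := by
    refine le_of_mul_le_mul_right ?_ hs
    nlinarith [Real.mul_self_sqrt ha.le]
  have hcτ : c * τ ≤ 2 := by
    refine le_of_mul_le_mul_right ?_ hs
    nlinarith
  have key := profile_expression_nonneg hs.le hτ0 hsτ hcτ hατ hβτ hr
  rw [Real.sq_sqrt ha.le] at key
  subst hp
  rw [deriv_half_mul_sq_add_mul, deriv_mul_add]
  linarith
end
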